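/- arXiv:1208.6508 — 3 statements merged into one kernel-verified Lean document; each statement's English description precedes it below -/
import Mathlib

section
/- Let C be a compact convex subset of ℝ² with positive area, let P be a point, and let A(θ) = area(C ∩ H(P,θ)) with H(P,θ) = {x : ⟨x − P, (−sin θ, cos θ)⟩ ≥ 0}. Suppose α < β with β − α < π, A(α) = 0 and A(β) = area(C). Then A is monotone nondecreasing on the interval [α, β]. -/
open MeasureTheory
open scoped RealInnerProductSpace ENNReal

/-!
Write `f θ` for the signed distance from a point to the line through `P` of angle `θ`.
For `α ≤ θ₁ ≤ θ₂ < α + π` the identity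
`sin (θ₂ - θ₁) f α = sin (θ₂ - α) f θ₁ - sin (θ₁ - α) f θ₂` has nonnegative sines, so
`f θ₁ ≥ 0 > f θ₂` forces `f α ≥ 0`: `H θ₁ ⊆ H θ₂ ∪ H α`. As `C ∩ H α` is null, `A θ₁ ≤ A θ₂`.
-/

open Real

noncomputable def halfPlane (Q : EuclideanSpace ℝ (Fin 2)) (θ : ℝ) :
    Set (EuclideanSpace ℝ (Fin 2)) :=
  {x | 0 ≤ ⟪x - Q, (WithLp.toLp 2 ![-sin θ, cos θ] : EuclideanSpace ℝ (Fin 2))⟫}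

lemma inner_toLp_neg_sin_cos (v : EuclideanSpace ℝ (Fin 2)) (θ : ℝ) :
    ⟪v, (WithLp.toLp 2 ![-sin θ, cos θ] : EuclideanSpace ℝ (Fin 2))⟫ =
      v 1 * cos θ - v 0 * sin θ := by
  simp only [PiLp.inner_apply, RCLike.inner_apply, ringHom_apply, Fin.sum_univ_two,
    Matrix.cons_val_zero, Matrix.cons_val_one, Matrix.cons_val_fin_one]
  ring

lemma sin_sub_mul_cos_sub_sin (p q a b c : ℝ) :
    sin (c - b) * (q * cos a - p * sin a) =
      sin (c - a) * (q * cos b - p * sin b) - sin (b - a) * (q * cos c - p * sin c) := by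
  simp only [sin_sub]
  ring

lemma cos_sub_sin_nonneg_or_nonneg {p q a b c : ℝ} (hab : a ≤ b) (hbc : b ≤ c)
    (hca : c - a < π) (hb : 0 ≤ q * cos b - p * sin b) :
    0 ≤ q * cos c - p * sin c ∨ 0 ≤ q * cos a - p * sin a := by
  refine or_iff_not_imp_left.2 fun hc => ?_
  replace hc := not_le.1 hc
  have hbc' : b < c := lt_of_le_of_ne hbc (by rintro rfl; linarith)
  have hsin_cb : 0 < sin (c - b) := sin_pos_of_pos_of_lt_pi (by linarith) (by linarith)
  have hsin_ca : 0 ≤ sin (c - a) := sin_nonneg_of_nonneg_of_le_pi (by linarith) (by linarith)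
  have hsin_ba : 0 ≤ sin (b - a) := sin_nonneg_of_nonneg_of_le_pi (by linarith) (by linarith)
  refine (mul_nonneg_iff_of_pos_left hsin_cb).1 ?_
  rw [sin_sub_mul_cos_sub_sin]
  nlinarith [mul_nonneg hsin_ca hb, mul_nonneg hsin_ba (neg_nonneg.2 hc.le)]

lemma halfPlane_subset_union {a b c : ℝ} (hab : a ≤ b) (hbc : b ≤ c) (hca : c - a < π)
    (Q : EuclideanSpace ℝ (Fin 2)) : halfPlane Q b ⊆ halfPlane Q c ∪ halfPlane Q a := by
  intro x hx
  simp only [halfPlane, Set.mem_union, Set.mem_ofPred_eq, inner_toLp_neg_sin_cos] at hx ⊢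
  exact cos_sub_sin_nonneg_or_nonneg hab hbc hca hx

lemma measure_inter_le_of_subset_union_null {Ω : Type*} [MeasurableSpace Ω] {μ : Measure Ω}
    {C s t u : Set Ω} (hs : s ⊆ t ∪ u) (hu : μ (C ∩ u) = 0) : μ (C ∩ s) ≤ μ (C ∩ t) :=
  calc μ (C ∩ s) ≤ μ (C ∩ t ∪ C ∩ u) := by
        rw [← Set.inter_union_distrib_left]; exact measure_mono (Set.inter_subset_inter_right C hs)
    _ ≤ μ (C ∩ t) + μ (C ∩ u) := measure_union_le _ _
    _ = μ (C ∩ t) := by rw [hu, add_zero]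

theorem monotoneOn_halfplane_area_of_sweep_general
    (C : Set (EuclideanSpace ℝ (Fin 2)))
    (P : EuclideanSpace ℝ (Fin 2))
    (H : EuclideanSpace ℝ (Fin 2) → ℝ → Set (EuclideanSpace ℝ (Fin 2)))
    (hH : ∀ Q θ, H Q θ =
      {x | 0 ≤ ⟪x - Q, (WithLp.toLp 2 ![-Real.sin θ, Real.cos θ] : EuclideanSpace ℝ (Fin 2))⟫})
    (A : ℝ → ℝ≥0∞) (hA : ∀ θ, A θ = volume (C ∩ H P θ))
    (α β : ℝ) (hπ : β - α < Real.pi)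
    (hα : A α = 0) :
    MonotoneOn A (Set.Icc α β) := by
  obtain rfl : H = halfPlane := funext₂ hH
  rintro θ₁ ⟨hαθ₁, -⟩ θ₂ ⟨-, hθ₂β⟩ hθ₁₂
  rw [hA, hA]
  exact measure_inter_le_of_subset_union_null
    (halfPlane_subset_union hαθ₁ hθ₁₂ (by linarith) P) (hA α ▸ hα)

/-- If the line through `P` sweeps across the compact convex region `C` exactly once
as the angle goes from `α` to `β` (with `β - α < π`), then the swept area is a
monotone nondecreasing function of the angle on `[α, β]`. -/
theorem monotoneOn_halfplane_area_of_sweep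
    (C : Set (EuclideanSpace ℝ (Fin 2))) (hCcompact : IsCompact C) (hCconv : Convex ℝ C)
    (hCpos : 0 < volume C)
    (P : EuclideanSpace ℝ (Fin 2))
    (H : EuclideanSpace ℝ (Fin 2) → ℝ → Set (EuclideanSpace ℝ (Fin 2)))
    (hH : ∀ Q θ, H Q θ =
      {x | 0 ≤ ⟪x - Q, (WithLp.toLp 2 ![-Real.sin θ, Real.cos θ] : EuclideanSpace ℝ (Fin 2))⟫})
    (A : ℝ → ℝ≥0∞) (hA : ∀ θ, A θ = volume (C ∩ H P θ))
    (α β : ℝ) (hαβ : α < β) (hπ : β - α < Real.pi)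
    (hα : A α = 0) (hβ : A β = volume C) :
    MonotoneOn A (Set.Icc α β) :=
  monotoneOn_halfplane_area_of_sweep_general C P H hH A hA α β hπ hα
end

section
/- Let C be a compact, strictly convex subset of ℝ² with nonempty interior, and let P be a point not in C. For θ ∈ ℝ let L(θ) = {P + t·(cos θ, sin θ) : t ∈ ℝ}. Then the infimum, over all θ such that L(θ) meets the interior of C, of the chord length μH¹(C ∩ L(θ)) equals 0: for every ε > 0 there exists θ with L(θ) ∩ interior(C) ≠ ∅ and μH¹(C ∩ L(θ)) < ε. Consequently, for a convex region whose boundary contains no straight segments, the large-n limit of the fairness function is infinite at every exterior point. -/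
/-!
The angles `θ` for which `L θ` meets the interior of `C` form an open set `A ⊆ ℝ`. It is nonempty
because `C` has interior points, and it is not all of `ℝ` because the line through `P` parallel to
a line separating `P` from `C` misses `C`; so `A` has a boundary angle `θ₀ ∉ A`. If the chords
along all angles in `A` had length at least `ε`, then (a line being isometric to `ℝ`, where
Lebesgue measure is bounded by the diameter) they would contain two points at distance `> ε / 2`.
Along angles in `A` tending to `θ₀` these pairs converge, by compactness, to two distinct points
of `C` on `L θ₀`, and strict convexity puts their midpoint in the interior of `C`: so `θ₀ ∈ A`.
-/

open MeasureTheory Filter Metric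
open scoped ENNReal RealInnerProductSpace Topology

section Line

variable {E : Type*} [NormedAddCommGroup E] [NormedSpace ℝ E]

def lineThrough (P v : E) : Set E := Set.range fun t : ℝ => P + t • v

theorem isometry_lineThrough_param {P v : E} (hv : ‖v‖ = 1) :
    Isometry fun t : ℝ => P + t • v :=
  Isometry.of_dist_eq fun s t => by
    rw [dist_eq_norm, add_sub_add_left_eq_sub, ← sub_smul, norm_smul, hv, mul_one, Real.dist_eq,
      Real.norm_eq_abs]

theorem hausdorffMeasure_one_le_ediam_of_subset_lineThrough [MeasurableSpace E] [BorelSpace E]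
    {P v : E} (hv : ‖v‖ = 1) {S : Set E} (hS : S ⊆ lineThrough P v) : μH[1] S ≤ ediam S := by
  have hf := isometry_lineThrough_param (P := P) hv
  obtain ⟨T, rfl⟩ := Set.subset_range_iff_exists_image_eq.mp hS
  rw [hf.hausdorffMeasure_image (Or.inl zero_le_one), hf.ediam_image, hausdorffMeasure_real]
  exact Real.volume_le_diam T

theorem isOpen_setOf_lineThrough_inter_nonempty {X : Type*} [TopologicalSpace X] {v : X → E}
    (hv : Continuous v) (P : E) {U : Set E} (hU : IsOpen U) :
    IsOpen {x | (lineThrough P (v x) ∩ U).Nonempty} := by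
  have hF : IsOpen ((fun p : X × ℝ => P + p.2 • v p.1) ⁻¹' U) :=
    hU.preimage (by fun_prop)
  convert isOpenMap_fst _ hF using 1
  ext x
  constructor
  · rintro ⟨_, ⟨t, rfl⟩, ht⟩
    exact ⟨(x, t), ht, rfl⟩
  · rintro ⟨⟨x, t⟩, ht, rfl⟩
    exact ⟨_, ⟨t, rfl⟩, ht⟩

theorem exists_lt_dist_of_subset_lineThrough [MeasurableSpace E] [BorelSpace E] {P v : E}
    (hv : ‖v‖ = 1) {S : Set E} (hS : S ⊆ lineThrough P v) {δ : ℝ}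
    (h : ENNReal.ofReal δ < μH[1] S) : ∃ x ∈ S, ∃ y ∈ S, δ < dist x y := by
  by_contra! hdist
  refine h.not_ge ((hausdorffMeasure_one_le_ediam_of_subset_lineThrough hv hS).trans
    (ediam_le fun x hx y hy => ?_))
  rw [edist_dist]
  exact ENNReal.ofReal_le_ofReal (hdist x hx y hy)

end Line

section InnerProduct

variable {E : Type*} [NormedAddCommGroup E] [InnerProductSpace ℝ E]

theorem mem_lineThrough_of_tendsto {ι : Type*} {l : Filter ι} [l.NeBot] {P v₀ x₀ : E}
    {v x : ι → E} (hv : ∀ i, ‖v i‖ = 1) (hvt : Tendsto v l (𝓝 v₀)) (hxt : Tendsto x l (𝓝 x₀))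
    (hx : ∀ i, x i ∈ lineThrough P (v i)) : x₀ ∈ lineThrough P v₀ := by
  choose t ht using hx
  have ht_eq : ∀ i, t i = ⟪x i - P, v i⟫ := fun i => by
    rw [← ht i, add_sub_cancel_left, real_inner_smul_left, real_inner_self_eq_norm_sq, hv, one_pow,
      mul_one]
  have htt : Tendsto t l (𝓝 ⟪x₀ - P, v₀⟫) :=
    ((hxt.sub_const P).inner hvt).congr fun i => (ht_eq i).symm
  refine ⟨⟪x₀ - P, v₀⟫, tendsto_nhds_unique (tendsto_const_nhds.add (htt.smul hvt)) ?_⟩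
  simpa only [ht] using hxt

theorem StrictConvex.lineThrough_inter_interior_nonempty_of_tendsto {C : Set E}
    (hCs : StrictConvex ℝ C) (hC : IsCompact C) {P v₀ : E} {v x y : ℕ → E}
    (hv : ∀ n, ‖v n‖ = 1) (hvt : Tendsto v atTop (𝓝 v₀))
    (hx : ∀ n, x n ∈ C ∩ lineThrough P (v n)) (hy : ∀ n, y n ∈ C ∩ lineThrough P (v n))
    {δ : ℝ} (hδ : 0 < δ) (hxy : ∀ n, δ < dist (x n) (y n)) :
    (lineThrough P v₀ ∩ interior C).Nonempty := by
  obtain ⟨⟨x₀, y₀⟩, ⟨hx₀, hy₀⟩, φ, hφ, hlim⟩ :=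
    (hC.prod hC).tendsto_subseq (x := fun n => (x n, y n)) fun n => ⟨(hx n).1, (hy n).1⟩
  obtain ⟨hxt, hyt⟩ := (Prod.tendsto_iff _ _).mp hlim
  have hvφ := hvt.comp hφ.tendsto_atTop
  obtain ⟨s, rfl⟩ := mem_lineThrough_of_tendsto (fun n => hv (φ n)) hvφ hxt fun n => (hx (φ n)).2
  obtain ⟨t, rfl⟩ := mem_lineThrough_of_tendsto (fun n => hv (φ n)) hvφ hyt fun n => (hy (φ n)).2
  have hne : P + s • v₀ ≠ P + t • v₀ :=
    dist_pos.mp (hδ.trans_le (ge_of_tendsto' (hxt.dist hyt) fun n => (hxy (φ n)).le))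
  refine ⟨(1 / 2 : ℝ) • (P + s • v₀) + (1 / 2 : ℝ) • (P + t • v₀), ⟨(s + t) / 2, by module⟩, ?_⟩
  exact hCs hx₀ hy₀ hne (by norm_num) (by norm_num) (by norm_num)

end InnerProduct

section Plane

noncomputable def unitDir (θ : ℝ) : EuclideanSpace ℝ (Fin 2) :=
  (EuclideanSpace.equiv (Fin 2) ℝ).symm ![Real.cos θ, Real.sin θ]

theorem unitDir_eq_repr_exp (θ : ℝ) :
    unitDir θ = Complex.orthonormalBasisOneI.repr (Complex.exp (θ * Complex.I)) := by
  ext i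
  fin_cases i <;> simp [unitDir, Complex.exp_ofReal_mul_I_re, Complex.exp_ofReal_mul_I_im]

theorem norm_unitDir (θ : ℝ) : ‖unitDir θ‖ = 1 := by
  rw [unitDir_eq_repr_exp, LinearIsometryEquiv.norm_map, Complex.norm_exp_ofReal_mul_I]

theorem continuous_unitDir : Continuous unitDir := by
  simp only [funext unitDir_eq_repr_exp]
  fun_prop

theorem unitDir_add_pi (θ : ℝ) : unitDir (θ + Real.pi) = -unitDir θ := by
  simp only [unitDir_eq_repr_exp, Complex.ofReal_add, add_mul, Complex.exp_add,
    Complex.exp_pi_mul_I, mul_neg_one, map_neg]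

theorem eq_norm_smul_unitDir (w : EuclideanSpace ℝ (Fin 2)) :
    w = ‖w‖ • unitDir (Complex.orthonormalBasisOneI.repr.symm w).arg := by
  rw [unitDir_eq_repr_exp, ← map_smul, Complex.real_smul, ← LinearIsometryEquiv.norm_map
    Complex.orthonormalBasisOneI.repr.symm, Complex.norm_mul_exp_arg_mul_I,
    LinearIsometryEquiv.apply_symm_apply]

theorem exists_mem_lineThrough_unitDir (P x : EuclideanSpace ℝ (Fin 2)) :
    ∃ θ, x ∈ lineThrough P (unitDir θ) :=
  ⟨(Complex.orthonormalBasisOneI.repr.symm (x - P)).arg, ‖x - P‖, by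
    dsimp only
    rw [← eq_norm_smul_unitDir, add_sub_cancel]⟩

theorem exists_unitDir_apply_eq_zero (f : EuclideanSpace ℝ (Fin 2) →L[ℝ] ℝ) :
    ∃ θ, f (unitDir θ) = 0 := by
  have hπ : f (unitDir Real.pi) = -f (unitDir 0) := by
    rw [← zero_add Real.pi, unitDir_add_pi, map_neg]
  have h0 : (0 : ℝ) ∈ Set.uIcc (f (unitDir 0)) (f (unitDir Real.pi)) := by
    rw [hπ, Set.mem_uIcc]
    rcases le_total (f (unitDir 0)) 0 with h | h
    · exact Or.inl ⟨h, by linarith⟩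
    · exact Or.inr ⟨by linarith, h⟩
  obtain ⟨θ, -, hθ⟩ := intermediate_value_uIcc (f.continuous.comp continuous_unitDir).continuousOn h0
  exact ⟨θ, hθ⟩

theorem exists_disjoint_lineThrough_unitDir {C : Set (EuclideanSpace ℝ (Fin 2))}
    (hC : Convex ℝ C) (hCc : IsClosed C) {P : EuclideanSpace ℝ (Fin 2)} (hP : P ∉ C) :
    ∃ θ, Disjoint (lineThrough P (unitDir θ)) C := by
  obtain ⟨f, u, hfP, hfC⟩ := geometric_hahn_banach_point_closed hC hCc hP
  obtain ⟨θ, hθ⟩ := exists_unitDir_apply_eq_zero f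
  refine ⟨θ, Set.disjoint_left.mpr ?_⟩
  rintro _ ⟨t, rfl⟩ ht
  have := hfC _ ht
  rw [map_add, map_smul, hθ, smul_zero, add_zero] at this
  linarith

end Plane

/-- For a compact strictly convex region `C ⊆ ℝ²` with nonempty interior and a point
`P ∉ C`, the infimum of the chord lengths of `C` along lines through `P` meeting the
interior of `C` is `0`: for every `ε > 0` some line through `P` meets the interior of
`C` in a chord of length less than `ε`. Hence the `n → ∞` fairness limit is infinite
at every exterior point of a region with no straight boundary segments. -/
theorem strictConvex_exterior_chord_length_inf_zero
    (C : Set (EuclideanSpace ℝ (Fin 2))) (hCcompact : IsCompact C)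
    (hCconv : StrictConvex ℝ C) (hCint : (interior C).Nonempty)
    (P : EuclideanSpace ℝ (Fin 2)) (hP : P ∉ C)
    (L : ℝ → Set (EuclideanSpace ℝ (Fin 2)))
    (hL : ∀ θ, L θ = {x | ∃ t : ℝ,
      x = P + t • ((EuclideanSpace.equiv (Fin 2) ℝ).symm ![Real.cos θ, Real.sin θ])}) :
    ∀ ε : ℝ, 0 < ε → ∃ θ : ℝ, (L θ ∩ interior C).Nonempty ∧
      μH[1] (C ∩ L θ) < ENNReal.ofReal ε := by
  intro ε hε
  have hL' : ∀ θ, L θ = lineThrough P (unitDir θ) := fun θ => by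
    rw [hL]; ext x; exact exists_congr fun t => eq_comm
  set A := {θ | (lineThrough P (unitDir θ) ∩ interior C).Nonempty}
  have hA : IsOpen A := isOpen_setOf_lineThrough_inter_nonempty continuous_unitDir P isOpen_interior
  have hA_nonempty : A.Nonempty := by
    obtain ⟨x, hx⟩ := hCint
    obtain ⟨θ, hθ⟩ := exists_mem_lineThrough_unitDir P x
    exact ⟨θ, x, hθ, hx⟩
  have hA_ne_univ : A ≠ Set.univ := by
    obtain ⟨θ, hθ⟩ := exists_disjoint_lineThrough_unitDir hCconv.convex hCcompact.isClosed hP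
    exact fun h => (h ▸ Set.mem_univ θ : θ ∈ A).not_disjoint (hθ.mono_right interior_subset)
  obtain ⟨θ₀, hθ₀A, hθ₀⟩ : (closure A \ A).Nonempty :=
    hA.frontier_eq ▸ nonempty_frontier_iff.mpr ⟨hA_nonempty, hA_ne_univ⟩
  by_contra! hlong
  simp only [hL'] at hlong
  obtain ⟨θ, hθA, hθ⟩ := mem_closure_iff_seq_limit.mp hθ₀A
  have hhalf : ENNReal.ofReal (ε / 2) < ENNReal.ofReal ε :=
    (ENNReal.ofReal_lt_ofReal_iff hε).mpr (half_lt_self hε)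
  choose x hx y hy hxy using fun n => exists_lt_dist_of_subset_lineThrough (norm_unitDir (θ n))
    Set.inter_subset_right (hhalf.trans_le (hlong (θ n) (hθA n)))
  exact hθ₀ (hCconv.lineThrough_inter_interior_nonempty_of_tendsto hCcompact
    (fun n => norm_unitDir _) ((continuous_unitDir.tendsto θ₀).comp hθ) hx hy (half_pos hε) hxy)
end

section
/- Let C be a compact convex subset of ℝ², let P be a point, and for θ ∈ ℝ let L(θ) = {P + t·(cos θ, sin θ) : t ∈ ℝ} and g(θ) = μH¹(C ∩ L(θ)), the chord length of C along L(θ). If L(θ₀) meets the interior of C, then g is continuous at θ₀. -/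
open MeasureTheory
open scoped ENNReal

/-- Core convexity lemma: if a closed ball around `x` lies in a convex set `C` and `y ∈ C`,
then any point within `lam * ε` of the combination `(1-lam)•y + lam•x` lies in `C`. -/
lemma chord_aux_mem {E : Type*} [NormedAddCommGroup E] [NormedSpace ℝ E]
    {C : Set E} (hC : Convex ℝ C) {x y z : E} {ε lam : ℝ}
    (hball : Metric.closedBall x ε ⊆ C) (hy : y ∈ C) (h0 : 0 < lam) (h1 : lam ≤ 1)
    (hz : ‖z - ((1 - lam) • y + lam • x)‖ ≤ lam * ε) : z ∈ C := by
  set w := z - ((1 - lam) • y + lam • x) with hw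
  have hx2 : x + lam⁻¹ • w ∈ C := by
    apply hball
    rw [Metric.mem_closedBall, dist_eq_norm, add_sub_cancel_left, norm_smul, norm_inv,
      Real.norm_eq_abs, abs_of_pos h0, inv_mul_le_iff₀ h0]
    exact hz
  have hmem := hC hy hx2 (sub_nonneg.2 h1) h0.le (by ring)
  have heq : (1 - lam) • y + lam • (x + lam⁻¹ • w) = z := by
    rw [smul_add, smul_smul, mul_inv_cancel₀ h0.ne', one_smul, hw]
    abel
  rwa [heq] at hmem

/-- For a compact convex `C ⊆ ℝ²` and a point `P`, the chord length
`g(θ) = μH¹(C ∩ L(θ))` of `C` along the line `L(θ)` through `P` with direction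
`(cos θ, sin θ)` is continuous at every angle `θ₀` for which `L(θ₀)` meets the
interior of `C`. -/
theorem chord_length_continuousAt
    (C : Set (EuclideanSpace ℝ (Fin 2))) (hCcompact : IsCompact C) (hCconv : Convex ℝ C)
    (P : EuclideanSpace ℝ (Fin 2))
    (L : ℝ → Set (EuclideanSpace ℝ (Fin 2)))
    (hL : ∀ θ, L θ = {x | ∃ t : ℝ,
      x = P + t • ((EuclideanSpace.equiv (Fin 2) ℝ).symm ![Real.cos θ, Real.sin θ])})
    (g : ℝ → ℝ≥0∞) (hg : ∀ θ, g θ = μH[1] (C ∩ L θ))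
    (θ₀ : ℝ) (hθ₀ : (L θ₀ ∩ interior C).Nonempty) :
    ContinuousAt g θ₀ := by
  set u : ℝ → EuclideanSpace ℝ (Fin 2) :=
    fun θ => (EuclideanSpace.equiv (Fin 2) ℝ).symm ![Real.cos θ, Real.sin θ] with hu
  have hunorm : ∀ θ, ‖u θ‖ = 1 := by
    intro θ
    rw [hu]
    simp only [EuclideanSpace.norm_eq]
    rw [Fin.sum_univ_two]
    norm_num [Real.norm_eq_abs, sq_abs, Real.cos_sq_add_sin_sq]
  have hucont : Continuous u := by
    apply Continuous.comp (EuclideanSpace.equiv (Fin 2) ℝ).symm.continuous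
    apply continuous_pi
    intro i
    fin_cases i <;> simp <;> fun_prop
  set f : ℝ → ℝ → EuclideanSpace ℝ (Fin 2) := fun θ t => P + t • u θ with hf
  have hfisom : ∀ θ, Isometry (f θ) := by
    intro θ
    apply Isometry.of_dist_eq
    intro s t
    rw [hf]
    simp only [dist_eq_norm, add_sub_add_left_eq_sub, ← sub_smul, norm_smul, hunorm,
      mul_one, Real.norm_eq_abs]
  have hrange : ∀ θ, L θ = Set.range (f θ) := by
    intro θ
    rw [hL θ]
    ext x
    exact exists_congr fun t => eq_comm
  set I : ℝ → Set ℝ := fun θ => (f θ) ⁻¹' C with hI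
  have hgvol : ∀ θ, g θ = volume (I θ) := by
    intro θ
    rw [hg θ, hrange θ, ← Set.image_preimage_eq_inter_range,
      (hfisom θ).hausdorffMeasure_image (Or.inl one_pos.le),
      MeasureTheory.hausdorffMeasure_real]
  -- bound on C
  obtain ⟨R0, hR0⟩ := hCcompact.isBounded.subset_closedBall P
  set R : ℝ := |R0| + 1 with hRdef
  have hRpos : (0:ℝ) < R := by positivity
  have hCR : C ⊆ Metric.closedBall P R :=
    hR0.trans (Metric.closedBall_subset_closedBall (by simp [hRdef]; linarith [le_abs_self R0]))
  have hIsub : ∀ θ, I θ ⊆ Set.Icc (-R) R := by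
    intro θ t ht
    have h1 : f θ t ∈ Metric.closedBall P R := hCR ht
    rw [Metric.mem_closedBall, dist_eq_norm, hf] at h1
    simp only [add_sub_cancel_left, norm_smul, hunorm, mul_one, Real.norm_eq_abs] at h1
    exact ⟨neg_le_of_abs_le h1, le_of_abs_le h1⟩
  -- interior point
  obtain ⟨x₀, hx₀L, hx₀int⟩ := hθ₀
  rw [hL θ₀] at hx₀L
  obtain ⟨t₀, rfl⟩ : ∃ t : ℝ, x₀ = P + t • u θ₀ := hx₀L
  obtain ⟨ε, hεpos, hball⟩ : ∃ ε > 0, Metric.closedBall (P + t₀ • u θ₀) ε ⊆ C := by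
    obtain ⟨ε, hε, hb⟩ := Metric.isOpen_iff.1 isOpen_interior _ hx₀int
    exact ⟨ε/2, by linarith,
      (Metric.closedBall_subset_ball (by linarith)).trans (hb.trans interior_subset)⟩
  have ht₀mem : t₀ ∈ I θ₀ := show P + t₀ • u θ₀ ∈ C from interior_subset hx₀int
  have ht₀R : |t₀| ≤ R := abs_le.2 ⟨(hIsub θ₀ ht₀mem).1, (hIsub θ₀ ht₀mem).2⟩
  -- the two key transfer lemmas
  have keyA : ∀ θ lam t, 0 < lam → lam ≤ 1 → R * ‖u θ - u θ₀‖ ≤ lam * ε →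
      t ∈ I θ₀ → (1 - lam) * t + lam * t₀ ∈ I θ := by
    intro θ lam t h0 h1 hclose ht
    have htR : |t| ≤ R := abs_le.2 ⟨(hIsub θ₀ ht).1, (hIsub θ₀ ht).2⟩
    show P + ((1 - lam) * t + lam * t₀) • u θ ∈ C
    apply chord_aux_mem hCconv hball (show P + t • u θ₀ ∈ C from ht) h0 h1
    have hcombo : P + ((1 - lam) * t + lam * t₀) • u θ -
        ((1 - lam) • (P + t • u θ₀) + lam • (P + t₀ • u θ₀))
        = ((1 - lam) * t + lam * t₀) • (u θ - u θ₀) := by module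
    rw [hcombo, norm_smul, Real.norm_eq_abs]
    have habs : |(1 - lam) * t + lam * t₀| ≤ R := by
      calc |(1 - lam) * t + lam * t₀| ≤ |(1 - lam) * t| + |lam * t₀| := abs_add_le _ _
        _ = (1 - lam) * |t| + lam * |t₀| := by
            rw [abs_mul, abs_mul, abs_of_nonneg (by linarith : (0:ℝ) ≤ 1 - lam),
              abs_of_pos h0]
        _ ≤ R := by nlinarith
    calc |(1 - lam) * t + lam * t₀| * ‖u θ - u θ₀‖ ≤ R * ‖u θ - u θ₀‖ :=
          mul_le_mul_of_nonneg_right habs (norm_nonneg _)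
      _ ≤ lam * ε := hclose
  have keyB : ∀ θ lam t, 0 < lam → lam ≤ 1 → R * ‖u θ - u θ₀‖ ≤ lam * ε →
      t ∈ I θ → (1 - lam) * t + lam * t₀ ∈ I θ₀ := by
    intro θ lam t h0 h1 hclose ht
    have htR : |t| ≤ R := abs_le.2 ⟨(hIsub θ ht).1, (hIsub θ ht).2⟩
    show P + ((1 - lam) * t + lam * t₀) • u θ₀ ∈ C
    apply chord_aux_mem hCconv hball (show P + t • u θ ∈ C from ht) h0 h1
    have hcombo : P + ((1 - lam) * t + lam * t₀) • u θ₀ -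
        ((1 - lam) • (P + t • u θ) + lam • (P + t₀ • u θ₀))
        = ((1 - lam) * t) • (u θ₀ - u θ) := by module
    rw [hcombo, norm_smul, Real.norm_eq_abs, norm_sub_rev]
    have habs : |(1 - lam) * t| ≤ R := by
      rw [abs_mul, abs_of_nonneg (by linarith : (0:ℝ) ≤ 1 - lam)]
      nlinarith [abs_nonneg t]
    calc |(1 - lam) * t| * ‖u θ - u θ₀‖ ≤ R * ‖u θ - u θ₀‖ :=
          mul_le_mul_of_nonneg_right habs (norm_nonneg _)
      _ ≤ lam * ε := hclose
  -- nearness filter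
  have hnear : ∀ c : ℝ, 0 < c → ∀ᶠ θ in nhds θ₀, R * ‖u θ - u θ₀‖ ≤ c := by
    intro c hc
    have hcont2 : Continuous fun θ => R * ‖u θ - u θ₀‖ :=
      continuous_const.mul ((hucont.sub continuous_const).norm)
    have htend : Filter.Tendsto (fun θ => R * ‖u θ - u θ₀‖) (nhds θ₀) (nhds 0) := by
      have := hcont2.tendsto θ₀
      simpa using this
    exact (htend.eventually_lt_const hc).mono fun θ h => h.le
  -- interval structure
  have hIconv : ∀ θ, Convex ℝ (I θ) := by
    intro θ s hs t ht c d hc hd hcd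
    show P + (c • s + d • t) • u θ ∈ C
    have hmem := hCconv (show P + s • u θ ∈ C from hs) (show P + t • u θ ∈ C from ht) hc hd hcd
    have hcomb : c • (P + s • u θ) + d • (P + t • u θ)
        = (c + d) • P + (c • s + d • t) • u θ := by
      simp only [smul_eq_mul]
      module
    rw [hcomb, hcd, one_smul] at hmem
    exact hmem
  have hIclosed : ∀ θ, IsClosed (I θ) := by
    intro θ
    apply hCcompact.isClosed.preimage
    exact continuous_const.add (continuous_id.smul continuous_const)
  have hIcpt : ∀ θ, IsCompact (I θ) := fun θ =>
    isCompact_Icc.of_isClosed_subset (hIclosed θ) (hIsub θ)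
  have hbddA : ∀ θ, BddAbove (I θ) := fun θ => ⟨R, fun t ht => (hIsub θ ht).2⟩
  have hbddB : ∀ θ, BddBelow (I θ) := fun θ => ⟨-R, fun t ht => (hIsub θ ht).1⟩
  set a : ℝ → ℝ := fun θ => sInf (I θ) with ha
  set b : ℝ → ℝ := fun θ => sSup (I θ) with hb
  have hne : ∀ θ, R * ‖u θ - u θ₀‖ ≤ ε → (I θ).Nonempty := by
    intro θ hθ
    refine ⟨t₀, ?_⟩
    have := keyA θ 1 t₀ one_pos le_rfl (by simpa using hθ) ht₀mem
    simpa using this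
  have hmem : ∀ θ, (I θ).Nonempty → a θ ∈ I θ ∧ b θ ∈ I θ ∧ I θ = Set.Icc (a θ) (b θ) := by
    intro θ hneθ
    have haI := (hIcpt θ).sInf_mem hneθ
    have hbI := (hIcpt θ).sSup_mem hneθ
    refine ⟨haI, hbI, Set.Subset.antisymm ?_ ?_⟩
    · intro t ht
      exact ⟨csInf_le (hbddB θ) ht, le_csSup (hbddA θ) ht⟩
    · exact (hIconv θ).ordConnected.out haI hbI
  have hθ₀good : R * ‖u θ₀ - u θ₀‖ ≤ ε := by simp [hεpos.le]
  obtain ⟨ha₀, hb₀, hI₀⟩ := hmem θ₀ (hne θ₀ hθ₀good)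
  have ha₀R : |a θ₀| ≤ R := abs_le.2 ⟨(hIsub θ₀ ha₀).1, (hIsub θ₀ ha₀).2⟩
  have hb₀R : |b θ₀| ≤ R := abs_le.2 ⟨(hIsub θ₀ hb₀).1, (hIsub θ₀ hb₀).2⟩
  -- continuity of the endpoints
  have hendpoints : ∀ ε' > (0:ℝ), ∀ᶠ θ in nhds θ₀,
      |b θ - b θ₀| < ε' ∧ |a θ - a θ₀| < ε' := by
    intro ε' hε'
    set lam : ℝ := min (1/2) (ε' / (8 * R)) with hlamdef
    have hlam0 : 0 < lam := lt_min (by norm_num) (by positivity)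
    have hlam2 : lam ≤ 1/2 := min_le_left _ _
    have hlam1 : lam ≤ 1 := hlam2.trans (by norm_num)
    have hlamε : lam * (8 * R) ≤ ε' := by
      have h1 : lam ≤ ε' / (8 * R) := min_le_right _ _
      have h2 : (0:ℝ) < 8 * R := by positivity
      calc lam * (8 * R) ≤ ε' / (8 * R) * (8 * R) :=
            mul_le_mul_of_nonneg_right h1 h2.le
        _ = ε' := div_mul_cancel₀ _ h2.ne'
    filter_upwards [hnear (lam * ε) (by positivity)] with θ hθ
    have hθε : R * ‖u θ - u θ₀‖ ≤ ε := by
      refine hθ.trans ?_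
      calc lam * ε ≤ 1 * ε := mul_le_mul_of_nonneg_right hlam1 hεpos.le
        _ = ε := one_mul ε
    obtain ⟨haθ, hbθ, hIθ⟩ := hmem θ (hne θ hθε)
    have haθR : |a θ| ≤ R := abs_le.2 ⟨(hIsub θ haθ).1, (hIsub θ haθ).2⟩
    have hbθR : |b θ| ≤ R := abs_le.2 ⟨(hIsub θ hbθ).1, (hIsub θ hbθ).2⟩
    have h1 : (1 - lam) * b θ₀ + lam * t₀ ≤ b θ :=
      le_csSup (hbddA θ) (keyA θ lam (b θ₀) hlam0 hlam1 hθ hb₀)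
    have h2 : (1 - lam) * b θ + lam * t₀ ≤ b θ₀ :=
      le_csSup (hbddA θ₀) (keyB θ lam (b θ) hlam0 hlam1 hθ hbθ)
    have h3 : a θ ≤ (1 - lam) * a θ₀ + lam * t₀ :=
      csInf_le (hbddB θ) (keyA θ lam (a θ₀) hlam0 hlam1 hθ ha₀)
    have h4 : a θ₀ ≤ (1 - lam) * a θ + lam * t₀ :=
      csInf_le (hbddB θ₀) (keyB θ lam (a θ) hlam0 hlam1 hθ haθ)
    have hbt₀ := abs_le.1 ht₀R
    have hb₀' := abs_le.1 hb₀R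
    have hbθ' := abs_le.1 hbθR
    have ha₀' := abs_le.1 ha₀R
    have haθ' := abs_le.1 haθR
    constructor
    · rw [abs_sub_lt_iff]
      constructor
      · linarith [mul_le_mul_of_nonneg_left (show b θ - t₀ ≤ 2*R by linarith) hlam0.le]
      · linarith [mul_le_mul_of_nonneg_left (show b θ₀ - t₀ ≤ 2*R by linarith) hlam0.le]
    · rw [abs_sub_lt_iff]
      constructor
      · linarith [mul_le_mul_of_nonneg_left (show t₀ - a θ₀ ≤ 2*R by linarith) hlam0.le]
      · linarith [mul_le_mul_of_nonneg_left (show t₀ - a θ ≤ 2*R by linarith) hlam0.le]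
  have hacont : ContinuousAt a θ₀ := by
    rw [Metric.continuousAt_iff']
    intro ε' hε'
    filter_upwards [hendpoints ε' hε'] with θ hθ
    rw [Real.dist_eq]
    exact hθ.2
  have hbcont : ContinuousAt b θ₀ := by
    rw [Metric.continuousAt_iff']
    intro ε' hε'
    filter_upwards [hendpoints ε' hε'] with θ hθ
    rw [Real.dist_eq]
    exact hθ.1
  -- assemble
  have heq : ∀ᶠ θ in nhds θ₀, g θ = ENNReal.ofReal (b θ - a θ) := by
    filter_upwards [hnear ε hεpos] with θ hθ
    obtain ⟨-, -, hIθ⟩ := hmem θ (hne θ hθ)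
    rw [hgvol θ, hIθ, Real.volume_Icc]
  have hcont : ContinuousAt (fun θ => ENNReal.ofReal (b θ - a θ)) θ₀ :=
    ENNReal.continuous_ofReal.continuousAt.comp (hbcont.sub hacont)
  exact hcont.congr (Filter.EventuallyEq.symm heq)
end
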